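/- arXiv:1408.4714 — 3 statements merged into one kernel-verified Lean document; each statement's English description precedes it below -/
import Mathlib

section
/- Let T ≥ 2 and let f₁,…,f_T > 0. For p ∈ (0,1) define the Pareto-Path MTL coefficients λ_t(p) = (∑_{s=1}^T f_s^p)^{(1−p)/p} / f_t^{1−p} for t = 1,…,T. Then: (i) λ_t(p) > 1 for every t and every p ∈ (0,1); and (ii) for each t, the map p ↦ λ_t(p) is monotonically nonincreasing on (0,1), i.e., if 0 < p₁ ≤ p₂ < 1 then λ_t(p₂) ≤ λ_t(p₁). -/
private theorem sum_rpow_le' {T : ℕ} (b : Fin T → ℝ) (hb : ∀ i, 0 ≤ b i) {r : ℝ} (hr : 1 ≤ r) :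
    ∑ i, b i ^ r ≤ (∑ i, b i) ^ r := by
  set S := ∑ i, b i with hS
  have hS0 : 0 ≤ S := Finset.sum_nonneg fun i _ => hb i
  rcases eq_or_lt_of_le hS0 with h | h
  · have hz : ∀ i, b i = 0 := by
      intro i
      exact (Finset.sum_eq_zero_iff_of_nonneg (fun i _ => hb i)).mp h.symm i (Finset.mem_univ i)
    simp only [hz]
    rw [Real.zero_rpow (by linarith)]
    simpa using Real.rpow_nonneg hS0 r
  · have hr1 : r - 1 + 1 = r := by ring
    have key : ∀ i, b i ^ r ≤ S ^ (r - 1) * b i := by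
      intro i
      rcases eq_or_lt_of_le (hb i) with h0 | h0
      · rw [← h0, Real.zero_rpow (by linarith), mul_zero]
      · have hbi : b i ≤ S := Finset.single_le_sum (fun i _ => hb i) (Finset.mem_univ i)
        calc b i ^ r = b i ^ (r - 1) * b i := by
              rw [← hr1, Real.rpow_add_one (ne_of_gt h0)]; rw [hr1]
          _ ≤ S ^ (r - 1) * b i :=
              mul_le_mul_of_nonneg_right (Real.rpow_le_rpow h0.le hbi (by linarith)) (hb i)
    calc ∑ i, b i ^ r ≤ ∑ i, S ^ (r - 1) * b i := Finset.sum_le_sum fun i _ => key i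
      _ = S ^ (r - 1) * S := by rw [← Finset.mul_sum]
      _ = S ^ r := by rw [← hr1, Real.rpow_add_one (ne_of_gt h)]; rw [hr1]

private theorem lp_mono' {T : ℕ} (f : Fin T → ℝ) (hf : ∀ t, 0 < f t) {p q : ℝ}
    (hp : 0 < p) (hpq : p ≤ q) :
    (∑ s, f s ^ q) ^ (1/q) ≤ (∑ s, f s ^ p) ^ (1/p) := by
  have hq : 0 < q := lt_of_lt_of_le hp hpq
  have h1 : ∑ s, f s ^ q = ∑ s, (f s ^ p) ^ (q/p) := by
    refine Finset.sum_congr rfl fun s _ => ?_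
    rw [← Real.rpow_mul (hf s).le]
    congr 1; field_simp
  have h2 : ∑ s, (f s ^ p) ^ (q/p) ≤ (∑ s, f s ^ p) ^ (q/p) :=
    sum_rpow_le' _ (fun s => Real.rpow_nonneg (hf s).le _) ((one_le_div hp).mpr hpq)
  have h3 : (0:ℝ) ≤ ∑ s, f s ^ q := Finset.sum_nonneg fun s _ => Real.rpow_nonneg (hf s).le _
  calc (∑ s, f s ^ q) ^ (1/q) ≤ ((∑ s, f s ^ p) ^ (q/p)) ^ (1/q) :=
        Real.rpow_le_rpow h3 (h1 ▸ h2) (by positivity)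
    _ = (∑ s, f s ^ p) ^ (1/p) := by
        rw [← Real.rpow_mul (Finset.sum_nonneg fun s _ => Real.rpow_nonneg (hf s).le _)]
        congr 1; field_simp

/-- Theorem: properties of the Pareto-Path MTL coefficients.
For `T ≥ 2` positive objective values `f₁,…,f_T` and `p ∈ (0,1)`, the coefficients
`λ_t(p) = (∑_s f_s^p)^((1-p)/p) / f_t^(1-p)` satisfy `λ_t(p) > 1`, and each
`p ↦ λ_t(p)` is monotonically nonincreasing on `(0,1)`. (All powers are real powers.) -/
theorem paretoPath_coefficients {T : ℕ} (hT : 2 ≤ T) (f : Fin T → ℝ) (hf : ∀ t, 0 < f t)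
    (lam : ℝ → Fin T → ℝ)
    (hlam : ∀ p t, lam p t = (∑ s, f s ^ p) ^ ((1 - p) / p) / f t ^ (1 - p)) :
    (∀ p ∈ Set.Ioo (0 : ℝ) 1, ∀ t, 1 < lam p t) ∧
      (∀ t, ∀ p₁ p₂ : ℝ, 0 < p₁ → p₁ ≤ p₂ → p₂ < 1 → lam p₂ t ≤ lam p₁ t) := by
  have hSpos : ∀ p : ℝ, (0:ℝ) < ∑ s, f s ^ p := by
    intro p
    have : Nonempty (Fin T) := ⟨⟨0, by omega⟩⟩
    exact Finset.sum_pos (fun s _ => Real.rpow_pos_of_pos (hf s) p) Finset.univ_nonempty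
  -- for each t, f t ^ p < ∑ s, f s ^ p
  have hlt : ∀ (p : ℝ) (t : Fin T), f t ^ p < ∑ s, f s ^ p := by
    intro p t
    obtain ⟨j, hj⟩ : ∃ j : Fin T, j ≠ t :=
      Fintype.exists_ne_of_one_lt_card (by simp; omega) t
    exact Finset.single_lt_sum hj (Finset.mem_univ t) (Finset.mem_univ j)
      (Real.rpow_pos_of_pos (hf j) p) (fun k _ _ => (Real.rpow_pos_of_pos (hf k) p).le)
  constructor
  · rintro p ⟨hp0, hp1⟩ t
    rw [hlam]
    rw [one_lt_div (Real.rpow_pos_of_pos (hf t) _)]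
    have : f t ^ (1 - p) = (f t ^ p) ^ ((1 - p) / p) := by
      rw [← Real.rpow_mul (hf t).le]
      congr 1; field_simp
    rw [this]
    exact Real.rpow_lt_rpow (Real.rpow_pos_of_pos (hf t) p).le (hlt p t)
      (div_pos (by linarith) hp0)
  · intro t p₁ p₂ hp1 hle hp2
    have hp2pos : 0 < p₂ := lt_of_lt_of_le hp1 hle
    have hp11 : p₁ < 1 := lt_of_le_of_lt hle hp2
    -- lam p t = (M p / f t) ^ (1 - p) where M p = (∑ f^p)^(1/p)
    have key : ∀ p : ℝ, 0 < p →
        lam p t = ((∑ s, f s ^ p) ^ (1/p) / f t) ^ (1 - p) := by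
      intro p hp
      rw [hlam, Real.div_rpow (Real.rpow_nonneg (hSpos p).le _) (hf t).le,
        ← Real.rpow_mul (hSpos p).le]
      congr 2
      field_simp
    rw [key p₁ hp1, key p₂ hp2pos]
    set M : ℝ → ℝ := fun p => (∑ s, f s ^ p) ^ (1/p) with hM
    have hMt : ∀ p : ℝ, 0 < p → f t ≤ M p := by
      intro p hp
      have h1 : f t ^ p ≤ ∑ s, f s ^ p := (hlt p t).le
      have := Real.rpow_le_rpow (Real.rpow_pos_of_pos (hf t) p).le h1 (le_of_lt (by positivity : (0:ℝ) < 1/p))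
      rwa [← Real.rpow_mul (hf t).le, mul_one_div, div_self hp.ne', Real.rpow_one] at this
    have hbase1 : 1 ≤ M p₁ / f t := (one_le_div (hf t)).mpr (hMt p₁ hp1)
    have hMle : M p₂ ≤ M p₁ := lp_mono' f hf hp1 hle
    calc (M p₂ / f t) ^ (1 - p₂) ≤ (M p₁ / f t) ^ (1 - p₂) := by
          apply Real.rpow_le_rpow
            (div_nonneg (Real.rpow_nonneg (hSpos p₂).le _) (hf t).le) _ (by linarith)
          gcongr
          exact (hf t).le
      _ ≤ (M p₁ / f t) ^ (1 - p₁) :=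
          Real.rpow_le_rpow_of_exponent_le hbase1 (by linarith)
end

section
/- Assume the set C ⊆ H^T is invariant under componentwise positive scalings, i.e., if (w₁,…,w_T) ∈ C and c₁,…,c_T > 0 then (c₁w₁,…,c_Tw_T) ∈ C. For γ = (γ₁,…,γ_T) with γ ≻ 0 define the weighted empirical Rademacher complexity R(F_λ, γ) = (2/(TN)) E_σ[sup_{w ∈ F_λ} ∑_{t=1}^T ∑_{i=1}^N γ_t σ_t^i ⟨w_t, φ_{t,i}⟩]. Then for fixed λ ≻ 0 with F_λ nonempty, R(F_λ, γ) is monotonically increasing with respect to each γ_t: if 0 < γ_t⁽¹⁾ ≤ γ_t⁽²⁾ for all t, then R(F_λ, γ⁽¹⁾) ≤ R(F_λ, γ⁽²⁾). -/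
/-- The real sign `±1` associated with a Boolean Rademacher variable. -/
noncomputable def sgn (b : Bool) : ℝ := if b then 1 else -1

/-- The hypothesis class `F_λ = {w ∈ C : ∑_t λ_t ‖w_t‖² ≤ R}`. -/
def hypClass {H : Type*} [NormedAddCommGroup H] [InnerProductSpace ℝ H]
    {T : ℕ} (C : Set (Fin T → H)) (R : ℝ) (lam : Fin T → ℝ) : Set (Fin T → H) :=
  {w | w ∈ C ∧ ∑ t, lam t * ‖w t‖ ^ 2 ≤ R}

/-- The `γ`-weighted empirical Rademacher complexity
`R(F, γ) = (2/(TN)) E_σ[sup_{w ∈ F} ∑_t ∑_i γ_t σ_t^i ⟨w_t, φ_{t,i}⟩]`,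
the expectation being the average over all sign patterns `σ ∈ {±1}^{T×N}`. -/
noncomputable def radComplexityWeighted {H : Type*} [NormedAddCommGroup H]
    [InnerProductSpace ℝ H] {T N : ℕ} (φ : Fin T → Fin N → H)
    (F : Set (Fin T → H)) (γ : Fin T → ℝ) : ℝ :=
  (2 / (T * N)) * ((1 / 2 ^ (T * N)) *
    ∑ σ : Fin T → Fin N → Bool,
      sSup ((fun w : Fin T → H =>
        ∑ t, ∑ i, γ t * (sgn (σ t i) * (inner ℝ (w t) (φ t i) : ℝ))) '' F))

/-- if `C` is invariant under componentwise positive scalings, `λ ≻ 0` is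
fixed with `F_λ` nonempty, and `0 < γ⁽¹⁾_t ≤ γ⁽²⁾_t` for all `t`, then
`R(F_λ, γ⁽¹⁾) ≤ R(F_λ, γ⁽²⁾)`; i.e. the weighted empirical Rademacher complexity is
monotonically increasing in each `γ_t`. -/
theorem radComplexityWeighted_monotone {H : Type*} [NormedAddCommGroup H]
    [InnerProductSpace ℝ H] {T N : ℕ} (hT : 0 < T) (hN : 0 < N)
    (φ : Fin T → Fin N → H) (C : Set (Fin T → H))
    (hC : ∀ w ∈ C, ∀ c : Fin T → ℝ, (∀ t, 0 < c t) → (fun t => c t • w t) ∈ C)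
    (R : ℝ) (hR : 0 < R) (lam : Fin T → ℝ) (hlam : ∀ t, 0 < lam t)
    (hne : (hypClass C R lam).Nonempty)
    (γ1 γ2 : Fin T → ℝ) (h : ∀ t, 0 < γ1 t ∧ γ1 t ≤ γ2 t) :
    radComplexityWeighted φ (hypClass C R lam) γ1 ≤
      radComplexityWeighted φ (hypClass C R lam) γ2 := by
  have hnorm : ∀ w ∈ hypClass C R lam, ∀ t, ‖w t‖ ≤ Real.sqrt (R / lam t) := by
    intro w hw t
    have h1 : lam t * ‖w t‖ ^ 2 ≤ R := by
      refine le_trans ?_ hw.2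
      apply Finset.single_le_sum (f := fun t => lam t * ‖w t‖ ^ 2)
        (fun s _ => mul_nonneg (hlam s).le (sq_nonneg _)) (Finset.mem_univ t)
    have h2 : ‖w t‖ ^ 2 ≤ R / lam t := by
      rw [le_div_iff₀ (hlam t)]; linarith [h1]
    calc ‖w t‖ = Real.sqrt (‖w t‖ ^ 2) := by
          rw [Real.sqrt_sq (norm_nonneg _)]
      _ ≤ Real.sqrt (R / lam t) := Real.sqrt_le_sqrt h2
  unfold radComplexityWeighted
  apply mul_le_mul_of_nonneg_left _ (by positivity)
  apply mul_le_mul_of_nonneg_left _ (by positivity)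
  apply Finset.sum_le_sum
  intro σ _
  apply csSup_le_csSup
  · -- bounded above
    refine ⟨∑ t, ∑ i, |γ2 t| * (Real.sqrt (R / lam t) * ‖φ t i‖), ?_⟩
    rintro x ⟨w, hw, rfl⟩
    apply Finset.sum_le_sum
    intro t _
    apply Finset.sum_le_sum
    intro i _
    have hb : |sgn (σ t i) * (inner ℝ (w t) (φ t i) : ℝ)| ≤
        Real.sqrt (R / lam t) * ‖φ t i‖ := by
      rw [abs_mul]
      have : |sgn (σ t i)| = 1 := by unfold sgn; split <;> simp
      rw [this, one_mul]
      calc |(inner ℝ (w t) (φ t i) : ℝ)| ≤ ‖w t‖ * ‖φ t i‖ :=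
            abs_real_inner_le_norm _ _
        _ ≤ Real.sqrt (R / lam t) * ‖φ t i‖ :=
            mul_le_mul_of_nonneg_right (hnorm w hw t) (norm_nonneg _)
    calc γ2 t * (sgn (σ t i) * (inner ℝ (w t) (φ t i) : ℝ))
        ≤ |γ2 t * (sgn (σ t i) * (inner ℝ (w t) (φ t i) : ℝ))| := le_abs_self _
      _ = |γ2 t| * |sgn (σ t i) * (inner ℝ (w t) (φ t i) : ℝ)| := abs_mul _ _
      _ ≤ |γ2 t| * (Real.sqrt (R / lam t) * ‖φ t i‖) :=
          mul_le_mul_of_nonneg_left hb (abs_nonneg _)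
  · exact hne.image _
  · -- subset
    rintro x ⟨w, hw, rfl⟩
    have hc : ∀ t, 0 < γ1 t / γ2 t := fun t =>
      div_pos (h t).1 (lt_of_lt_of_le (h t).1 (h t).2)
    refine ⟨fun t => (γ1 t / γ2 t) • w t, ⟨hC w hw.1 _ hc, ?_⟩, ?_⟩
    · refine le_trans (Finset.sum_le_sum fun t _ => ?_) hw.2
      have hc1 : γ1 t / γ2 t ≤ 1 :=
        div_le_one_of_le₀ (h t).2 (le_of_lt (lt_of_lt_of_le (h t).1 (h t).2))
      have : ‖(γ1 t / γ2 t) • w t‖ ^ 2 = (γ1 t / γ2 t) ^ 2 * ‖w t‖ ^ 2 := by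
        rw [norm_smul, mul_pow, Real.norm_eq_abs, sq_abs]
      rw [this]
      have h2 : (γ1 t / γ2 t) ^ 2 * ‖w t‖ ^ 2 ≤ 1 * ‖w t‖ ^ 2 := by
        apply mul_le_mul_of_nonneg_right _ (by positivity)
        calc (γ1 t / γ2 t) ^ 2 ≤ 1 ^ 2 := by
              apply pow_le_pow_left₀ (le_of_lt (hc t)) hc1
          _ = 1 := one_pow 2
      nlinarith [sq_nonneg (‖w t‖), (hlam t), h2, sq_nonneg (γ1 t / γ2 t)]
    · apply Finset.sum_congr rfl
      intro t _
      apply Finset.sum_congr rfl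
      intro i _
      rw [real_inner_smul_left]
      have hγ2 : γ2 t ≠ 0 := ne_of_gt (lt_of_lt_of_le (h t).1 (h t).2)
      field_simp
end

section
/- Let H be a real Hilbert space, let x₁,…,x_n ∈ H, and let p ≥ 1. Then E_σ[ ‖∑_{i=1}^n σ_i x_i‖^p ] ≤ ( p · ∑_{i=1}^n ‖x_i‖² )^{p/2}, where the expectation is the average over all sign vectors σ = (σ₁,…,σ_n) ∈ {−1,+1}^n (i.i.d. Rademacher variables). -/
section Aux

local notation "⟪" x ", " y "⟫" => @inner ℝ _ _ x y

lemma sgn_not (b : Bool) : sgn (!b) = - sgn b := by cases b <;> simp [sgn]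

lemma abs_sgn (b : Bool) : |sgn b| = 1 := by cases b <;> simp [sgn]

/-- Pairing inequality: `P^α M^β + P^β M^α ≤ P^(α+β) + M^(α+β)` for nonneg `P, M`. -/
lemma pairing_ineq {P M : ℝ} (hP : 0 ≤ P) (hM : 0 ≤ M) (α β : ℕ) :
    P ^ α * M ^ β + P ^ β * M ^ α ≤ P ^ (α + β) + M ^ (α + β) := by
  rcases le_total P M with h | h
  · have hα : P ^ α ≤ M ^ α := pow_le_pow_left₀ hP h α
    have hβ : P ^ β ≤ M ^ β := pow_le_pow_left₀ hP h β
    have key : 0 ≤ (M ^ α - P ^ α) * (M ^ β - P ^ β) :=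
      mul_nonneg (sub_nonneg.2 hα) (sub_nonneg.2 hβ)
    rw [pow_add, pow_add]; nlinarith
  · have hα : M ^ α ≤ P ^ α := pow_le_pow_left₀ hM h α
    have hβ : M ^ β ≤ P ^ β := pow_le_pow_left₀ hM h β
    have key : 0 ≤ (P ^ α - M ^ α) * (P ^ β - M ^ β) :=
      mul_nonneg (sub_nonneg.2 hα) (sub_nonneg.2 hβ)
    rw [pow_add, pow_add]; nlinarith

/-- Real key inequality behind the moment recursion. -/
lemma real_key {P M a c : ℝ} (m : ℕ) (hP : 0 ≤ P) (hM : 0 ≤ M) (ha : 0 ≤ a)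
    (hPM : P - M = 4 * c) (hc : c ^ 2 ≤ a * (P + M) / 2) :
    c * (P ^ m - M ^ m) ≤ 2 * m * a * (P ^ m + M ^ m) := by
  set G : ℝ := ∑ s ∈ Finset.range m, P ^ s * M ^ (m - 1 - s) with hG
  have hGnn : 0 ≤ G :=
    Finset.sum_nonneg fun s _ => mul_nonneg (pow_nonneg hP _) (pow_nonneg hM _)
  have h1 : c * (P ^ m - M ^ m) = 4 * c ^ 2 * G := by
    rw [← geom_sum₂_mul P M m, ← hG, hPM]; ring
  have h2 : 4 * c ^ 2 * G ≤ 2 * a * ((P + M) * G) := by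
    have h4c : 4 * c ^ 2 ≤ 2 * a * (P + M) := by linarith
    calc 4 * c ^ 2 * G ≤ (2 * a * (P + M)) * G := mul_le_mul_of_nonneg_right h4c hGnn
      _ = 2 * a * ((P + M) * G) := by ring
  have h3 : (P + M) * G ≤ m * (P ^ m + M ^ m) := by
    have e1 : (P + M) * G
        = ∑ s ∈ Finset.range m, (P ^ (s + 1) * M ^ (m - 1 - s) + P ^ s * M ^ (m - s)) := by
      rw [hG, Finset.mul_sum]
      refine Finset.sum_congr rfl fun s hs => ?_
      have hs' : s < m := Finset.mem_range.1 hs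
      rw [show m - s = (m - 1 - s) + 1 from by omega]
      ring
    have e2 : ∑ s ∈ Finset.range m, P ^ s * M ^ (m - s)
        = ∑ s ∈ Finset.range m, P ^ (m - 1 - s) * M ^ (s + 1) := by
      rw [← Finset.sum_range_reflect (fun s => P ^ s * M ^ (m - s)) m]
      refine Finset.sum_congr rfl fun s hs => ?_
      have hs' : s < m := Finset.mem_range.1 hs
      rw [show m - (m - 1 - s) = s + 1 from by omega]
    have e3 : (P + M) * G
        = ∑ s ∈ Finset.range m, (P ^ (s + 1) * M ^ (m - 1 - s) + P ^ (m - 1 - s) * M ^ (s + 1)) := by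
      rw [e1, Finset.sum_add_distrib, e2, ← Finset.sum_add_distrib]
    rw [e3]
    calc ∑ s ∈ Finset.range m, (P ^ (s + 1) * M ^ (m - 1 - s) + P ^ (m - 1 - s) * M ^ (s + 1))
        ≤ ∑ _s ∈ Finset.range m, (P ^ m + M ^ m) := by
          refine Finset.sum_le_sum fun s hs => ?_
          have hs' : s < m := Finset.mem_range.1 hs
          have := pairing_ineq hP hM (s + 1) (m - 1 - s)
          rw [show (s + 1) + (m - 1 - s) = m from by omega] at this
          exact this
      _ = m * (P ^ m + M ^ m) := by
          rw [Finset.sum_const, Finset.card_range, nsmul_eq_mul]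
  calc c * (P ^ m - M ^ m) = 4 * c ^ 2 * G := h1
    _ ≤ 2 * a * ((P + M) * G) := h2
    _ ≤ 2 * a * (m * (P ^ m + M ^ m)) := by
        refine mul_le_mul_of_nonneg_left h3 (by linarith)
    _ = 2 * m * a * (P ^ m + M ^ m) := by ring

/-- Hilbert-space key inequality. -/
lemma hilbert_key {H : Type*} [NormedAddCommGroup H] [InnerProductSpace ℝ H]
    (w y : H) (k : ℕ) :
    ⟪y, w + y⟫ * ‖w + y‖ ^ (2 * k) - ⟪y, w - y⟫ * ‖w - y‖ ^ (2 * k)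
      ≤ (2 * k + 1) * ‖y‖ ^ 2 * (‖w + y‖ ^ (2 * k) + ‖w - y‖ ^ (2 * k)) := by
  have hP : (0 : ℝ) ≤ ‖w + y‖ ^ 2 := sq_nonneg _
  have hM : (0 : ℝ) ≤ ‖w - y‖ ^ 2 := sq_nonneg _
  have ha : (0 : ℝ) ≤ ‖y‖ ^ 2 := sq_nonneg _
  have hadd : ‖w + y‖ ^ 2 = ‖w‖ ^ 2 + 2 * ⟪w, y⟫ + ‖y‖ ^ 2 := norm_add_sq_real w y
  have hsub : ‖w - y‖ ^ 2 = ‖w‖ ^ 2 - 2 * ⟪w, y⟫ + ‖y‖ ^ 2 := norm_sub_sq_real w y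
  have hcomm : ⟪w, y⟫ = ⟪y, w⟫ := (real_inner_comm w y).symm
  have hPM : ‖w + y‖ ^ 2 - ‖w - y‖ ^ 2 = 4 * ⟪y, w⟫ := by
    rw [hadd, hsub, hcomm]; ring
  have hcs : ⟪y, w⟫ ^ 2 ≤ ‖y‖ ^ 2 * (‖w + y‖ ^ 2 + ‖w - y‖ ^ 2) / 2 := by
    have h1 : ⟪y, w⟫ * ⟪y, w⟫ ≤ ⟪y, y⟫ * ⟪w, w⟫ := real_inner_mul_inner_self_le y w
    rw [real_inner_self_eq_norm_sq, real_inner_self_eq_norm_sq] at h1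
    have h2 : ‖w + y‖ ^ 2 + ‖w - y‖ ^ 2 = 2 * ‖w‖ ^ 2 + 2 * ‖y‖ ^ 2 := by
      rw [hadd, hsub]; ring
    nlinarith [sq_nonneg (‖y‖ ^ 2)]
  have hrk := real_key k hP hM ha hPM hcs
  have hy1 : ⟪y, w + y⟫ = ⟪y, w⟫ + ‖y‖ ^ 2 := by
    rw [inner_add_right, real_inner_self_eq_norm_sq]
  have hy2 : ⟪y, w - y⟫ = ⟪y, w⟫ - ‖y‖ ^ 2 := by
    rw [inner_sub_right, real_inner_self_eq_norm_sq]
  rw [hy1, hy2, pow_mul, pow_mul]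
  nlinarith [hrk]

lemma update_sum {H : Type*} [NormedAddCommGroup H] [InnerProductSpace ℝ H]
    {n : ℕ} (x : Fin n → H) (σ : Fin n → Bool) (i : Fin n) (b : Bool) :
    ∑ j, sgn (Function.update σ i b j) • x j
      = (∑ j, sgn (σ j) • x j) - sgn (σ i) • x i + sgn b • x i := by
  have h1 := Finset.add_sum_erase Finset.univ
    (fun j => sgn (Function.update σ i b j) • x j) (Finset.mem_univ i)
  have h2 := Finset.add_sum_erase Finset.univ
    (fun j => sgn (σ j) • x j) (Finset.mem_univ i)
  have h3 : ∑ j ∈ Finset.univ.erase i, sgn (Function.update σ i b j) • x j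
      = ∑ j ∈ Finset.univ.erase i, sgn (σ j) • x j := by
    refine Finset.sum_congr rfl fun j hj => ?_
    rw [Function.update_of_ne (Finset.ne_of_mem_erase hj)]
  simp only [Function.update_self] at h1
  rw [← h1, ← h2, h3]
  abel

/-- The main recursion: `E‖Z‖^{2(k+1)} ≤ (2k+1) S · E‖Z‖^{2k}`. -/
lemma moment_recursion {H : Type*} [NormedAddCommGroup H] [InnerProductSpace ℝ H]
    {n : ℕ} (x : Fin n → H) (k : ℕ) :
    ∑ σ : Fin n → Bool, ‖∑ i, sgn (σ i) • x i‖ ^ (2 * (k + 1))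
      ≤ (2 * (k : ℝ) + 1) * (∑ i, ‖x i‖ ^ 2)
          * ∑ σ : Fin n → Bool, ‖∑ i, sgn (σ i) • x i‖ ^ (2 * k) := by
  classical
  set Z : (Fin n → Bool) → H := fun σ => ∑ i, sgn (σ i) • x i with hZdef
  have step1 : ∀ σ, ‖Z σ‖ ^ (2 * (k + 1))
      = ∑ i, sgn (σ i) * ⟪x i, Z σ⟫ * ‖Z σ‖ ^ (2 * k) := by
    intro σ
    have e1 : ‖Z σ‖ ^ (2 * (k + 1)) = ⟪Z σ, Z σ⟫ * ‖Z σ‖ ^ (2 * k) := by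
      rw [real_inner_self_eq_norm_sq, ← pow_add]
      congr 1
      omega
    have e2 : ⟪Z σ, Z σ⟫ = ∑ i, sgn (σ i) * ⟪x i, Z σ⟫ := by
      exact (sum_inner Finset.univ (fun i => sgn (σ i) • x i) (Z σ)).trans
        (Finset.sum_congr rfl fun i _ => real_inner_smul_left _ _ _)
    rw [e1, e2, Finset.sum_mul]
  have step2 : ∀ i : Fin n,
      ∑ σ : Fin n → Bool, sgn (σ i) * ⟪x i, Z σ⟫ * ‖Z σ‖ ^ (2 * k)
        ≤ (2 * (k : ℝ) + 1) * ‖x i‖ ^ 2 * ∑ σ : Fin n → Bool, ‖Z σ‖ ^ (2 * k) := by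
    intro i
    set F : (Fin n → Bool) → ℝ := fun σ => sgn (σ i) * ⟪x i, Z σ⟫ * ‖Z σ‖ ^ (2 * k) with hF
    set flip : (Fin n → Bool) → (Fin n → Bool) :=
      fun σ => Function.update σ i (!(σ i)) with hflip
    have hinv : Function.Involutive flip := by
      intro σ
      funext j
      rcases eq_or_ne j i with rfl | hj
      · simp [hflip, Function.update_self]
      · simp [hflip, Function.update_of_ne hj]
    have hre : ∀ g : (Fin n → Bool) → ℝ, ∑ σ, g (flip σ) = ∑ σ, g σ :=
      fun g => Fintype.sum_bijective flip hinv.bijective _ g (fun σ => rfl)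
    have pair : ∀ σ, F σ + F (flip σ)
        ≤ (2 * (k : ℝ) + 1) * ‖x i‖ ^ 2 * (‖Z σ‖ ^ (2 * k) + ‖Z (flip σ)‖ ^ (2 * k)) := by
      intro σ
      set s : ℝ := sgn (σ i) with hs
      set y : H := s • x i with hy
      set w : H := Z σ - y with hw
      have hZσ : Z σ = w + y := by rw [hw]; abel
      have hZflip : Z (flip σ) = w - y := by
        have := update_sum x σ i (!(σ i))
        rw [hZdef]
        show ∑ j, sgn (Function.update σ i (!(σ i)) j) • x j = w - y
        rw [this, sgn_not, hw, hZdef, ← hs, neg_smul, ← hy]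
        abel
      have hflipi : flip σ i = !(σ i) := by simp [hflip]
      have hFσ : F σ = ⟪y, w + y⟫ * ‖w + y‖ ^ (2 * k) := by
        rw [hF]
        show s * ⟪x i, Z σ⟫ * ‖Z σ‖ ^ (2 * k) = _
        rw [hZσ, hy, real_inner_smul_left]
      have hFflip : F (flip σ) = -(⟪y, w - y⟫ * ‖w - y‖ ^ (2 * k)) := by
        rw [hF]
        show sgn (flip σ i) * ⟪x i, Z (flip σ)⟫ * ‖Z (flip σ)‖ ^ (2 * k) = _
        rw [hflipi, sgn_not, hZflip, hy, real_inner_smul_left, ← hs]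
        ring
      have hyx : ‖y‖ = ‖x i‖ := by
        rw [hy, norm_smul, Real.norm_eq_abs, hs, abs_sgn, one_mul]
      have := hilbert_key w y k
      rw [hFσ, hFflip, hZσ, hZflip, ← hyx]
      linarith
    have h2sum : 2 * ∑ σ, F σ
        ≤ 2 * ((2 * (k : ℝ) + 1) * ‖x i‖ ^ 2 * ∑ σ : Fin n → Bool, ‖Z σ‖ ^ (2 * k)) := by
      have e1 : 2 * ∑ σ, F σ = ∑ σ, (F σ + F (flip σ)) := by
        rw [Finset.sum_add_distrib, hre F]; ring
      have e2 : ∑ σ, (‖Z σ‖ ^ (2 * k) + ‖Z (flip σ)‖ ^ (2 * k))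
          = 2 * ∑ σ : Fin n → Bool, ‖Z σ‖ ^ (2 * k) := by
        rw [Finset.sum_add_distrib, hre (fun σ => ‖Z σ‖ ^ (2 * k))]; ring
      calc 2 * ∑ σ, F σ = ∑ σ, (F σ + F (flip σ)) := e1
        _ ≤ ∑ σ, (2 * (k : ℝ) + 1) * ‖x i‖ ^ 2 * (‖Z σ‖ ^ (2 * k) + ‖Z (flip σ)‖ ^ (2 * k)) :=
            Finset.sum_le_sum fun σ _ => pair σ
        _ = (2 * (k : ℝ) + 1) * ‖x i‖ ^ 2
              * ∑ σ, (‖Z σ‖ ^ (2 * k) + ‖Z (flip σ)‖ ^ (2 * k)) := by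
            rw [Finset.mul_sum]
        _ = 2 * ((2 * (k : ℝ) + 1) * ‖x i‖ ^ 2 * ∑ σ : Fin n → Bool, ‖Z σ‖ ^ (2 * k)) := by
            rw [e2]; ring
    linarith
  calc ∑ σ : Fin n → Bool, ‖Z σ‖ ^ (2 * (k + 1))
      = ∑ σ : Fin n → Bool, ∑ i, sgn (σ i) * ⟪x i, Z σ⟫ * ‖Z σ‖ ^ (2 * k) :=
        Finset.sum_congr rfl fun σ _ => step1 σ
    _ = ∑ i, ∑ σ : Fin n → Bool, sgn (σ i) * ⟪x i, Z σ⟫ * ‖Z σ‖ ^ (2 * k) :=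
        Finset.sum_comm
    _ ≤ ∑ i, (2 * (k : ℝ) + 1) * ‖x i‖ ^ 2 * ∑ σ : Fin n → Bool, ‖Z σ‖ ^ (2 * k) :=
        Finset.sum_le_sum fun i _ => step2 i
    _ = (2 * (k : ℝ) + 1) * (∑ i, ‖x i‖ ^ 2) * ∑ σ : Fin n → Bool, ‖Z σ‖ ^ (2 * k) := by
        rw [← Finset.sum_mul, ← Finset.mul_sum]

lemma growth (k : ℕ) : (2 * (k : ℝ) + 1) * (k : ℝ) ^ k ≤ ((k : ℝ) + 1) ^ (k + 1) := by
  rcases Nat.eq_zero_or_pos k with rfl | hk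
  · norm_num
  · have hk' : (0 : ℝ) < k := by exact_mod_cast hk
    have h1 : (1 : ℝ) + k * (1 / k) ≤ (1 + 1 / k) ^ k := by
      refine one_add_mul_le_pow ?_ k
      have : (0 : ℝ) ≤ 1 / k := by positivity
      linarith
    have h2 : (k : ℝ) * (1 / k) = 1 := by field_simp
    have h3 : ((k : ℝ) + 1) ^ k = (1 + 1 / k) ^ k * (k : ℝ) ^ k := by
      rw [← mul_pow]
      congr 1
      field_simp
    have h4 : 2 * (k : ℝ) ^ k ≤ ((k : ℝ) + 1) ^ k := by
      rw [h3]
      have hkk : (0 : ℝ) ≤ (k : ℝ) ^ k := by positivity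
      nlinarith
    have hkk : (0 : ℝ) ≤ (k : ℝ) ^ k := by positivity
    calc (2 * (k : ℝ) + 1) * (k : ℝ) ^ k ≤ ((k : ℝ) + 1) * (2 * (k : ℝ) ^ k) := by nlinarith
      _ ≤ ((k : ℝ) + 1) * ((k : ℝ) + 1) ^ k := by
          refine mul_le_mul_of_nonneg_left h4 (by linarith)
      _ = ((k : ℝ) + 1) ^ (k + 1) := by rw [pow_succ]; ring

/-- `E‖Z‖^{2k} ≤ k^k S^k` (times the number of sign patterns). -/
lemma moment_bound {H : Type*} [NormedAddCommGroup H] [InnerProductSpace ℝ H]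
    {n : ℕ} (x : Fin n → H) (k : ℕ) :
    ∑ σ : Fin n → Bool, ‖∑ i, sgn (σ i) • x i‖ ^ (2 * k)
      ≤ 2 ^ n * ((k : ℝ) ^ k * (∑ i, ‖x i‖ ^ 2) ^ k) := by
  induction k with
  | zero =>
    simp [Fintype.card_fun]
  | succ k ih =>
    have hS : (0 : ℝ) ≤ ∑ i, ‖x i‖ ^ 2 :=
      Finset.sum_nonneg fun i _ => sq_nonneg _
    have h1 := moment_recursion x k
    have h2 : (2 * (k : ℝ) + 1) * (∑ i, ‖x i‖ ^ 2)
          * ∑ σ : Fin n → Bool, ‖∑ i, sgn (σ i) • x i‖ ^ (2 * k)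
        ≤ (2 * (k : ℝ) + 1) * (∑ i, ‖x i‖ ^ 2)
          * (2 ^ n * ((k : ℝ) ^ k * (∑ i, ‖x i‖ ^ 2) ^ k)) := by
      refine mul_le_mul_of_nonneg_left ih ?_
      have : (0 : ℝ) ≤ 2 * (k : ℝ) + 1 := by positivity
      exact mul_nonneg this hS
    have h3 : (2 * (k : ℝ) + 1) * (∑ i, ‖x i‖ ^ 2)
          * (2 ^ n * ((k : ℝ) ^ k * (∑ i, ‖x i‖ ^ 2) ^ k))
        ≤ 2 ^ n * (((k : ℝ) + 1) ^ (k + 1) * (∑ i, ‖x i‖ ^ 2) ^ (k + 1)) := by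
      have hg := growth k
      have hSk : (0 : ℝ) ≤ (∑ i, ‖x i‖ ^ 2) ^ (k + 1) := by positivity
      have h2n : (0 : ℝ) ≤ (2 : ℝ) ^ n := by positivity
      calc (2 * (k : ℝ) + 1) * (∑ i, ‖x i‖ ^ 2)
            * (2 ^ n * ((k : ℝ) ^ k * (∑ i, ‖x i‖ ^ 2) ^ k))
          = 2 ^ n * (((2 * (k : ℝ) + 1) * (k : ℝ) ^ k) * (∑ i, ‖x i‖ ^ 2) ^ (k + 1)) := by
            rw [pow_succ]; ring
        _ ≤ 2 ^ n * (((k : ℝ) + 1) ^ (k + 1) * (∑ i, ‖x i‖ ^ 2) ^ (k + 1)) := by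
            refine mul_le_mul_of_nonneg_left ?_ h2n
            exact mul_le_mul_of_nonneg_right hg hSk
    have := le_trans h1 (le_trans h2 h3)
    calc ∑ σ : Fin n → Bool, ‖∑ i, sgn (σ i) • x i‖ ^ (2 * (k + 1))
        ≤ 2 ^ n * (((k : ℝ) + 1) ^ (k + 1) * (∑ i, ‖x i‖ ^ 2) ^ (k + 1)) := this
      _ = 2 ^ n * (((k + 1 : ℕ) : ℝ) ^ (k + 1) * (∑ i, ‖x i‖ ^ 2) ^ (k + 1)) := by
          push_cast; ring

end Aux

/-- Khintchine-type inequality: for vectors `x₁,…,x_n` in a real Hilbert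
space and `p ≥ 1`, `E_σ[ ‖∑_i σ_i x_i‖^p ] ≤ (p ∑_i ‖x_i‖²)^{p/2}`, where the expectation
is the average over all sign vectors `σ ∈ {±1}^n`. -/
theorem rademacher_moment_bound {H : Type*} [NormedAddCommGroup H] [InnerProductSpace ℝ H]
    {n : ℕ} (x : Fin n → H) (p : ℝ) (hp : 1 ≤ p) :
    (1 / 2 ^ n) * ∑ σ : Fin n → Bool, ‖∑ i, sgn (σ i) • x i‖ ^ p ≤
      (p * ∑ i, ‖x i‖ ^ 2) ^ (p / 2) := by
  classical
  have hp0 : (0 : ℝ) < p := lt_of_lt_of_le one_pos hp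
  set S : ℝ := ∑ i, ‖x i‖ ^ 2 with hSdef
  have hS : 0 ≤ S := Finset.sum_nonneg fun i _ => sq_nonneg _
  set k : ℕ := ⌈p / 2⌉₊ with hkdef
  have hk1 : 1 ≤ k := Nat.one_le_ceil_iff.2 (by positivity)
  have hk0 : (0 : ℝ) < (k : ℝ) := by exact_mod_cast hk1
  have hp2k : p ≤ 2 * (k : ℝ) := by
    have := Nat.le_ceil (p / 2)
    rw [← hkdef] at this
    linarith
  have hkp : (k : ℝ) ≤ p := by
    rcases le_total p 2 with h | h
    · have hk_le : k ≤ 1 := by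
        rw [hkdef]
        exact Nat.ceil_le.2 (by push_cast; linarith)
      have : (k : ℝ) ≤ 1 := by exact_mod_cast hk_le
      linarith
    · have h1 : ((k : ℝ)) < p / 2 + 1 := by
        rw [hkdef]
        exact Nat.ceil_lt_add_one (by positivity)
      linarith
  set q : ℝ := 2 * (k : ℝ) / p with hqdef
  have hq1 : 1 ≤ q := by
    rw [hqdef]
    rw [le_div_iff₀ hp0]
    linarith
  have hq0 : 0 < q := lt_of_lt_of_le one_pos hq1
  -- mean inequality
  have hw' : ∑ _σ : Fin n → Bool, (1 / (2 : ℝ) ^ n) = 1 := by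
    rw [Finset.sum_const, nsmul_eq_mul]
    simp [Fintype.card_fun]
  have hmean := Real.arith_mean_le_rpow_mean Finset.univ
    (fun _ : Fin n → Bool => 1 / (2 : ℝ) ^ n)
    (fun σ : Fin n → Bool => ‖∑ i, sgn (σ i) • x i‖ ^ p)
    (fun _ _ => by positivity) hw'
    (fun σ _ => Real.rpow_nonneg (norm_nonneg _) p) hq1
  have hzq : ∀ σ : Fin n → Bool,
      (‖∑ i, sgn (σ i) • x i‖ ^ p) ^ q = ‖∑ i, sgn (σ i) • x i‖ ^ (2 * k : ℕ) := by
    intro σ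
    rw [← Real.rpow_natCast (‖∑ i, sgn (σ i) • x i‖) (2 * k), ← Real.rpow_mul (norm_nonneg _)]
    congr 1
    rw [hqdef]
    field_simp
    norm_num
  have hsum_eq : ∑ σ : Fin n → Bool, (1 / (2 : ℝ) ^ n) * (‖∑ i, sgn (σ i) • x i‖ ^ p) ^ q
      = (1 / (2 : ℝ) ^ n) * ∑ σ : Fin n → Bool, ‖∑ i, sgn (σ i) • x i‖ ^ (2 * k : ℕ) := by
    rw [Finset.mul_sum]
    exact Finset.sum_congr rfl fun σ _ => by rw [hzq σ]
  have hmom := moment_bound x k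
  have hinner : (1 / (2 : ℝ) ^ n) * ∑ σ : Fin n → Bool, ‖∑ i, sgn (σ i) • x i‖ ^ (2 * k : ℕ)
      ≤ (k : ℝ) ^ k * S ^ k := by
    have h2n : (0 : ℝ) < 2 ^ n := by positivity
    rw [div_mul_eq_mul_div, one_mul, div_le_iff₀ h2n]
    calc ∑ σ : Fin n → Bool, ‖∑ i, sgn (σ i) • x i‖ ^ (2 * k : ℕ)
        ≤ 2 ^ n * ((k : ℝ) ^ k * S ^ k) := hmom
      _ = (k : ℝ) ^ k * S ^ k * 2 ^ n := by ring
  have hsum_nonneg : 0 ≤ ∑ σ : Fin n → Bool,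
      (1 / (2 : ℝ) ^ n) * (‖∑ i, sgn (σ i) • x i‖ ^ p) ^ q :=
    Finset.sum_nonneg fun σ _ => mul_nonneg (by positivity)
      (Real.rpow_nonneg (Real.rpow_nonneg (norm_nonneg _) p) q)
  have hfinal : (∑ σ : Fin n → Bool,
        (1 / (2 : ℝ) ^ n) * (‖∑ i, sgn (σ i) • x i‖ ^ p) ^ q) ^ (1 / q)
      ≤ (p * S) ^ (p / 2) := by
    have h1q : (0 : ℝ) ≤ 1 / q := by positivity
    have step : (∑ σ : Fin n → Bool,
          (1 / (2 : ℝ) ^ n) * (‖∑ i, sgn (σ i) • x i‖ ^ p) ^ q) ^ (1 / q)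
        ≤ ((k : ℝ) ^ k * S ^ k) ^ (1 / q) := by
      refine Real.rpow_le_rpow hsum_nonneg ?_ h1q
      rw [hsum_eq]
      exact hinner
    have hkS : (0 : ℝ) ≤ (k : ℝ) * S := mul_nonneg hk0.le hS
    have e1 : ((k : ℝ) ^ k * S ^ k) ^ (1 / q) = ((k : ℝ) * S) ^ ((k : ℝ) * (1 / q)) := by
      rw [← mul_pow, ← Real.rpow_natCast ((k : ℝ) * S) k, ← Real.rpow_mul hkS]
    have e2 : (k : ℝ) * (1 / q) = p / 2 := by
      rw [hqdef]
      field_simp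
    have e3 : ((k : ℝ) * S) ^ (p / 2) ≤ (p * S) ^ (p / 2) := by
      refine Real.rpow_le_rpow hkS (mul_le_mul_of_nonneg_right hkp hS) (by positivity)
    calc (∑ σ : Fin n → Bool,
          (1 / (2 : ℝ) ^ n) * (‖∑ i, sgn (σ i) • x i‖ ^ p) ^ q) ^ (1 / q)
        ≤ ((k : ℝ) ^ k * S ^ k) ^ (1 / q) := step
      _ = ((k : ℝ) * S) ^ ((k : ℝ) * (1 / q)) := e1
      _ = ((k : ℝ) * S) ^ (p / 2) := by rw [e2]
      _ ≤ (p * S) ^ (p / 2) := e3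
  calc (1 / 2 ^ n) * ∑ σ : Fin n → Bool, ‖∑ i, sgn (σ i) • x i‖ ^ p
      = ∑ σ : Fin n → Bool, (1 / (2 : ℝ) ^ n) * ‖∑ i, sgn (σ i) • x i‖ ^ p := by
        rw [Finset.mul_sum]
    _ ≤ (∑ σ : Fin n → Bool,
          (1 / (2 : ℝ) ^ n) * (‖∑ i, sgn (σ i) • x i‖ ^ p) ^ q) ^ (1 / q) := hmean
    _ ≤ (p * S) ^ (p / 2) := hfinal
end
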